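/- For any 2×2 unitary matrix U = [U_{ij}]_{i,j=1,2}, the trace-norm coherence generating power of the unitary channel ρ ↦ UρU† equals C₁(U) = max{ |U_{11}U_{12}|, |U_{21}U_{22}| }, i.e. sup over diagonal qubit density matrices ρ of (1/2)·inf over diagonal density matrices σ of ‖UρU† − σ‖₁ equals max_{i=1,2} |U_{i1}U_{i2}|. -/

import Mathlib

open scoped Kronecker ComplexOrder Matrix

variable {ι : Type*} [Fintype ι] [DecidableEq ι]

/-- A quantum state: positive semidefinite matrix of trace one. -/
def IsState (ρ : Matrix ι ι ℂ) : Prop := ρ.PosSemidef ∧ ρ.trace = 1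

/-- The action of `id_n ⊗ N` on block matrices. -/
def idTensorMap (n : ℕ) (N : Matrix ι ι ℂ →ₗ[ℂ] Matrix ι ι ℂ)
    (M : Matrix (Fin n × ι) (Fin n × ι) ℂ) : Matrix (Fin n × ι) (Fin n × ι) ℂ :=
  Matrix.of fun p q => N (Matrix.of fun k l => M (p.1, k) (q.1, l)) p.2 q.2

/-- A quantum channel: completely positive trace preserving linear map. -/
structure Channel (ι : Type*) [Fintype ι] [DecidableEq ι] where
  map : Matrix ι ι ℂ →ₗ[ℂ] Matrix ι ι ℂ
  cp : ∀ (n : ℕ) (M : Matrix (Fin n × ι) (Fin n × ι) ℂ), M.PosSemidef →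
        (idTensorMap n map M).PosSemidef
  tp : ∀ A : Matrix ι ι ℂ, (map A).trace = A.trace

/-- The trace norm ‖A‖₁ = Tr √(AᴴA). -/
noncomputable def traceNorm (A : Matrix ι ι ℂ) : ℝ :=
  ((Matrix.posSemidef_conjTranspose_mul_self A).1.eigenvectorUnitary.1 *
    Matrix.diagonal ((fun x : ℝ => (x : ℂ)) ∘ (fun x : ℝ => √x) ∘ (Matrix.posSemidef_conjTranspose_mul_self A).1.eigenvalues) *
    (star (Matrix.posSemidef_conjTranspose_mul_self A).1.eigenvectorUnitary : Matrix ι ι ℂ)).trace.re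

/-- Trace-norm resource measure ω₁. -/
noncomputable def omega1 (F : Set (Matrix ι ι ℂ)) (ρ : Matrix ι ι ℂ) : ℝ :=
  (1/2) * sInf ((fun σ => traceNorm (ρ - σ)) '' F)

/-- Trace-norm resource generating power Ω₁. -/
noncomputable def genPower1 (F : Set (Matrix ι ι ℂ)) (N : Matrix ι ι ℂ → Matrix ι ι ℂ) : ℝ :=
  sSup ((fun ρ => omega1 F (N ρ)) '' F)

/-- Trace-norm resource increasing power Ω̃₁. -/
noncomputable def incPower1 (F : Set (Matrix ι ι ℂ)) (N : Matrix ι ι ℂ → Matrix ι ι ℂ) : ℝ :=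
  sSup ((fun ρ => omega1 F (N ρ) - omega1 F ρ) '' {ρ | IsState ρ})

/-- Holevo–Helstrom success probability of discriminating two channels with probe `ρ`. -/
noncomputable def psuccPair (N M : Matrix ι ι ℂ → Matrix ι ι ℂ) (ρ : Matrix ι ι ℂ) : ℝ :=
  1/2 + (1/4) * traceNorm (N ρ - M ρ)

/-- Success probability of discriminating `N` from the set of channels `Free` with probe `ρ`. -/
noncomputable def psuccChan (N : Matrix ι ι ℂ → Matrix ι ι ℂ) (Free : Set (Channel ι))
    (ρ : Matrix ι ι ℂ) : ℝ :=
  sInf ((fun M : Channel ι => psuccPair N (⇑M.map) ρ) '' Free)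

/-- Maximum success probability of discriminating `N` from `Free` using probes from `F`. -/
noncomputable def psuccFF (N : Matrix ι ι ℂ → Matrix ι ι ℂ) (Free : Set (Channel ι))
    (F : Set (Matrix ι ι ℂ)) : ℝ :=
  sSup ((fun ρ => psuccChan N Free ρ) '' F)

/-- The set of incoherent states: states diagonal in the fixed (standard) basis. -/
def incoherentStates (d : ℕ) : Set (Matrix (Fin d) (Fin d) ℂ) :=
  {ρ | IsState ρ ∧ ρ.IsDiag}

/-!
For an incoherent qubit `ρ = diag(p, 1 - p)`, orthogonality of the rows of `U` gives
`(UρU†)₁₂ = (2p - 1) U₁₁ Ū₂₁`. For any qubit state `M` the nearest incoherent state in trace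
norm is its diagonal part: subtracting a diagonal `σ` leaves the entry `M₁₂` untouched, the trace
norm of a Hermitian matrix is at least twice the modulus of each off-diagonal entry (the columns
of a unitary have unit norm), and a Hermitian matrix with zero diagonal is a multiple of a unitary,
so equality holds for `σ = diag M`. Thus `C₁(UρU†) = |2p - 1| |U₁₁| |U₂₁|`, largest at `p = 1`,
and unitarity gives `|U₁₂| = |U₂₁|`, `|U₂₂| = |U₁₁|`.
-/

open Matrix

namespace Matrix

variable {n : Type*} [Fintype n] [DecidableEq n]

lemma sum_norm_sq_col_eq_one_of_mem_unitaryGroup {U : Matrix n n ℂ}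
    (hU : U ∈ unitaryGroup n ℂ) (j : n) : ∑ i, ‖U i j‖ ^ 2 = 1 := by
  have h := congrFun (congrFun (mem_unitaryGroup_iff'.mp hU) j) j
  simp only [star_eq_conjTranspose, mul_apply, conjTranspose_apply, one_apply_eq,
    Complex.star_def, Complex.conj_mul'] at h
  exact_mod_cast h

lemma norm_mul_norm_le_half_of_mem_unitaryGroup {U : Matrix n n ℂ}
    (hU : U ∈ unitaryGroup n ℂ) {i j : n} (hij : i ≠ j) (k : n) :
    ‖U i k‖ * ‖U j k‖ ≤ 1 / 2 := by
  have hpair : ‖U i k‖ ^ 2 + ‖U j k‖ ^ 2 ≤ 1 := by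
    rw [← Finset.sum_pair (f := fun l => ‖U l k‖ ^ 2) hij,
      ← sum_norm_sq_col_eq_one_of_mem_unitaryGroup hU k]
    exact Finset.sum_le_univ_sum_of_nonneg fun _ => sq_nonneg _
  nlinarith [sq_nonneg (‖U i k‖ - ‖U j k‖)]

lemma norm_apply_zero_one_eq_of_mem_unitaryGroup {U : Matrix (Fin 2) (Fin 2) ℂ}
    (hU : U ∈ unitaryGroup (Fin 2) ℂ) : ‖U 0 1‖ = ‖U 1 0‖ := by
  have hrow := sum_norm_sq_col_eq_one_of_mem_unitaryGroup
    (transpose_mem_unitaryGroup_iff.mpr hU) 0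
  have hcol := sum_norm_sq_col_eq_one_of_mem_unitaryGroup hU 0
  simp only [Fin.sum_univ_two, transpose_apply] at hrow hcol
  exact (pow_left_inj₀ (norm_nonneg _) (norm_nonneg _) two_ne_zero).mp (by linarith)

lemma norm_apply_one_one_eq_of_mem_unitaryGroup {U : Matrix (Fin 2) (Fin 2) ℂ}
    (hU : U ∈ unitaryGroup (Fin 2) ℂ) : ‖U 1 1‖ = ‖U 0 0‖ := by
  have hrow := sum_norm_sq_col_eq_one_of_mem_unitaryGroup
    (transpose_mem_unitaryGroup_iff.mpr hU) 1
  have hcol := sum_norm_sq_col_eq_one_of_mem_unitaryGroup hU 0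
  simp only [Fin.sum_univ_two, transpose_apply] at hrow hcol
  exact (pow_left_inj₀ (norm_nonneg _) (norm_nonneg _) two_ne_zero).mp (by linarith)

lemma IsHermitian.trace_cfc {𝕜 : Type*} [RCLike 𝕜] {A : Matrix n n 𝕜} (hA : A.IsHermitian)
    (f : ℝ → ℝ) : (cfc f A).trace = ∑ i, (f (hA.eigenvalues i) : 𝕜) := by
  rw [hA.cfc_eq, IsHermitian.cfc, Unitary.conjStarAlgAut_apply, trace_mul_cycle,
    Unitary.coe_star_mul_self, one_mul, trace_diagonal]
  rfl

end Matrix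

variable {n : Type*} [Fintype n]

lemma IsState.norm_apply_sub_apply_le_one {ρ : Matrix n n ℂ} (hρ : IsState ρ) (i j : n) :
    ‖ρ i i - ρ j j‖ ≤ 1 := by
  have hbound : ∀ k, ∃ a : ℝ, 0 ≤ a ∧ a ≤ 1 ∧ ρ k k = a := fun k => by
    have hle : ρ k k ≤ 1 := by
      rw [← hρ.2]
      exact Finset.single_le_sum (f := fun l => ρ l l) (fun l _ => hρ.1.diag_nonneg)
        (Finset.mem_univ k)
    obtain ⟨a, ha, hak⟩ := RCLike.nonneg_iff_exists_ofReal.mp (hρ.1.diag_nonneg (i := k))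
    refine ⟨a, ha, ?_, hak.symm⟩
    rw [← hak, ← RCLike.ofReal_one] at hle
    exact RCLike.ofReal_le_ofReal.mp hle
  obtain ⟨a, ha0, ha1, ha⟩ := hbound i
  obtain ⟨b, hb0, hb1, hb⟩ := hbound j
  rw [ha, hb, ← Complex.ofReal_sub, Complex.norm_real, Real.norm_eq_abs, abs_le]
  constructor <;> linarith

variable [DecidableEq n]

lemma traceNorm_eq_re_trace_cfc_sqrt (A : Matrix n n ℂ) :
    traceNorm A = (cfc Real.sqrt (Aᴴ * A)).trace.re := by
  rw [(posSemidef_conjTranspose_mul_self A).1.cfc_eq, IsHermitian.cfc,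
    Unitary.conjStarAlgAut_apply]
  rfl

lemma traceNorm_eq_sum_abs_eigenvalues {A : Matrix n n ℂ} (hA : A.IsHermitian) :
    traceNorm A = ∑ i, |hA.eigenvalues i| := by
  have hsq : Aᴴ * A = cfc (fun x : ℝ => x * x) A := by
    rw [hA.eq, cfc_mul (fun x : ℝ => x) (fun x : ℝ => x) A, cfc_id' ℝ A]
  have habs : cfc Real.sqrt (Aᴴ * A) = cfc (fun x : ℝ => |x|) A := by
    rw [hsq, ← cfc_comp' Real.sqrt (fun x : ℝ => x * x) A]
    exact cfc_congr fun x _ => Real.sqrt_mul_self_eq_abs x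
  rw [traceNorm_eq_re_trace_cfc_sqrt, habs, hA.trace_cfc]
  simp

lemma traceNorm_eq_card_mul_of_conjTranspose_mul_self_eq {A : Matrix n n ℂ} {c : ℝ} (hc : 0 ≤ c)
    (hA : Aᴴ * A = algebraMap ℝ (Matrix n n ℂ) (c ^ 2)) : traceNorm A = Fintype.card n * c := by
  rw [traceNorm_eq_re_trace_cfc_sqrt, hA, cfc_algebraMap, Real.sqrt_sq hc,
    algebraMap_eq_diagonal, trace_diagonal]
  simp

lemma two_mul_norm_apply_le_traceNorm {A : Matrix n n ℂ} (hA : A.IsHermitian) {i j : n}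
    (hij : i ≠ j) : 2 * ‖A i j‖ ≤ traceNorm A := by
  set V : Matrix n n ℂ := hA.eigenvectorUnitary.1
  have hspec : A = V * diagonal (fun k => (hA.eigenvalues k : ℂ)) * Vᴴ := hA.spectral_theorem
  have hentry : A i j = ∑ k, (hA.eigenvalues k : ℂ) * (V i k * star (V j k)) := by
    conv_lhs => rw [hspec, mul_apply]
    refine Finset.sum_congr rfl fun k _ => ?_
    rw [mul_diagonal, conjTranspose_apply]
    ring
  calc 2 * ‖A i j‖
      ≤ 2 * ∑ k, |hA.eigenvalues k| * (‖V i k‖ * ‖V j k‖) := by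
        rw [hentry]
        gcongr
        refine (norm_sum_le _ _).trans_eq (Finset.sum_congr rfl fun k _ => ?_)
        simp
    _ ≤ 2 * ∑ k, |hA.eigenvalues k| * (1 / 2) := by
        gcongr with k
        exact norm_mul_norm_le_half_of_mem_unitaryGroup hA.eigenvectorUnitary.2 hij k
    _ = traceNorm A := by
        rw [traceNorm_eq_sum_abs_eigenvalues hA, Finset.mul_sum]
        ring_nf

lemma traceNorm_fin_two_of_diag_eq_zero {A : Matrix (Fin 2) (Fin 2) ℂ} (hA : A.IsHermitian)
    (h00 : A 0 0 = 0) (h11 : A 1 1 = 0) : traceNorm A = 2 * ‖A 0 1‖ := by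
  have h10 : A 1 0 = star (A 0 1) := by rw [← conjTranspose_apply, hA.eq]
  have hsq : Aᴴ * A = algebraMap ℝ (Matrix (Fin 2) (Fin 2) ℂ) (‖A 0 1‖ ^ 2) := by
    rw [hA.eq, algebraMap_eq_diagonal]
    ext i j
    fin_cases i <;> fin_cases j <;>
      simp [mul_apply, h00, h11, h10, Complex.mul_conj', Complex.conj_mul']
  rw [traceNorm_eq_card_mul_of_conjTranspose_mul_self_eq (norm_nonneg _) hsq]
  simp

lemma IsState.conj_unitary {ρ U : Matrix n n ℂ} (hρ : IsState ρ) (hU : U ∈ unitaryGroup n ℂ) :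
    IsState (U * ρ * Uᴴ) :=
  ⟨hρ.1.mul_mul_conjTranspose_same U, by
    rw [trace_mul_cycle, ← star_eq_conjTranspose, mem_unitaryGroup_iff'.mp hU, one_mul, hρ.2]⟩

lemma diagonal_diag_mem_incoherentStates {d : ℕ} {ρ : Matrix (Fin d) (Fin d) ℂ} (hρ : IsState ρ) :
    diagonal ρ.diag ∈ incoherentStates d :=
  ⟨⟨PosSemidef.diagonal fun _ => hρ.1.diag_nonneg, by rw [trace_diagonal, ← hρ.2]; rfl⟩,
    isDiag_diagonal _⟩

lemma diagonal_single_mem_incoherentStates {d : ℕ} (i : Fin d) :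
    diagonal (Pi.single i 1) ∈ incoherentStates d := by
  refine ⟨⟨PosSemidef.diagonal fun k => ?_, by simp [trace_diagonal]⟩, isDiag_diagonal _⟩
  rcases eq_or_ne k i with rfl | hk <;> simp [*]

lemma omega1_incoherentStates_two {M : Matrix (Fin 2) (Fin 2) ℂ} (hM : IsState M) :
    omega1 (incoherentStates 2) M = ‖M 0 1‖ := by
  have hoff : ∀ σ ∈ incoherentStates 2, (M - σ) 0 1 = M 0 1 := fun σ hσ => by
    simp [hσ.2 zero_ne_one]
  have hdiag := diagonal_diag_mem_incoherentStates hM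
  have hleast : IsLeast ((fun σ => traceNorm (M - σ)) '' incoherentStates 2) (2 * ‖M 0 1‖) := by
    refine ⟨⟨_, hdiag, ?_⟩, ?_⟩
    · dsimp only
      rw [traceNorm_fin_two_of_diag_eq_zero (hM.1.1.sub hdiag.1.1.1) (by simp) (by simp),
        hoff _ hdiag]
    · rintro _ ⟨σ, hσ, rfl⟩
      rw [← hoff σ hσ]
      exact two_mul_norm_apply_le_traceNorm (hM.1.1.sub hσ.1.1.1) zero_ne_one
  rw [omega1, hleast.csInf_eq]
  ring

lemma conj_unitary_apply_zero_one_of_isDiag {U ρ : Matrix (Fin 2) (Fin 2) ℂ}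
    (hU : U ∈ unitaryGroup (Fin 2) ℂ) (hρ : ρ.IsDiag) :
    (U * ρ * Uᴴ) 0 1 = (ρ 0 0 - ρ 1 1) * (U 0 0 * star (U 1 0)) := by
  have horth := congrFun (congrFun (mem_unitaryGroup_iff.mp hU) 0) 1
  simp only [star_eq_conjTranspose, mul_apply, conjTranspose_apply, Fin.sum_univ_two,
    one_apply_ne zero_ne_one] at horth
  simp only [mul_apply, Fin.sum_univ_two, conjTranspose_apply, hρ zero_ne_one, hρ one_ne_zero]
  linear_combination ρ 1 1 * horth

/-- for a 2×2 unitary `U`, the trace-norm coherence generating power of the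
unitary channel `ρ ↦ UρU†` is `max {|U₁₁U₁₂|, |U₂₁U₂₂|}`. -/
theorem stmt16 (U : Matrix (Fin 2) (Fin 2) ℂ) (hU : U ∈ Matrix.unitaryGroup (Fin 2) ℂ) :
    genPower1 (incoherentStates 2) (fun ρ => U * ρ * Uᴴ)
      = max ‖U 0 0 * U 0 1‖ ‖U 1 0 * U 1 1‖ := by
  set c := ‖U 0 0‖ * ‖U 1 0‖
  have hmax : max ‖U 0 0 * U 0 1‖ ‖U 1 0 * U 1 1‖ = c := by
    rw [norm_mul, norm_mul, norm_apply_zero_one_eq_of_mem_unitaryGroup hU,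
      norm_apply_one_one_eq_of_mem_unitaryGroup hU, mul_comm ‖U 1 0‖, max_self]
  have hval : ∀ ρ ∈ incoherentStates 2,
      omega1 (incoherentStates 2) (U * ρ * Uᴴ) = ‖ρ 0 0 - ρ 1 1‖ * c := fun ρ hρ => by
    rw [omega1_incoherentStates_two (hρ.1.conj_unitary hU),
      conj_unitary_apply_zero_one_of_isDiag hU hρ.2, norm_mul, norm_mul, norm_star]
  rw [hmax, genPower1]
  refine IsGreatest.csSup_eq ⟨⟨_, diagonal_single_mem_incoherentStates 0, ?_⟩, ?_⟩
  · simp [hval _ (diagonal_single_mem_incoherentStates 0)]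
  · rintro _ ⟨ρ, hρ, rfl⟩
    dsimp only
    rw [hval ρ hρ]
    exact mul_le_of_le_one_left (by positivity) (hρ.1.norm_apply_sub_apply_le_one 0 1)
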